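/- Let {V1, V2} be a split of a circle graph G with marker vertex v and resulting simple split decomposition {G1, G2}. If G1 has a k1-polygon representation and G2 has a k2-polygon representation, then G has a (k1 + k2)-polygon representation. -/

import Mathlib

open SimpleGraph

/-- The circle on which chord diagrams live (the unit circle as an additive circle). -/
abbrev Circ : Type := AddCircle (1 : ℝ)

/-- A circle representation of a graph `G`: each vertex `v` gets a chord with
distinct endpoints `p v` and `q v`, all `2|V|` endpoints are distinct, and two
distinct vertices are adjacent iff their chords cross (i.e. exactly one endpoint
of one chord lies strictly inside an arc determined by the other chord). -/
structure CircleRep (V : Type) (G : SimpleGraph V) where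
  p : V → Circ
  q : V → Circ
  inj : Function.Injective (Sum.elim p q)
  adj : ∀ u v : V, G.Adj u v ↔ u ≠ v ∧
    Xor' (sbtw (p v) (p u) (q v)) (sbtw (p v) (q u) (q v))

namespace CircleRep

variable {V : Type} {G : SimpleGraph V} (R : CircleRep V G)

/-- The two open arcs of the chord of `v`: `b = true` is the arc from `p v`
clockwise to `q v`, `b = false` is the other arc. -/
def ArcSet (v : V) (b : Bool) : Set Circ :=
  if b then {x | sbtw (R.p v) x (R.q v)} else {x | sbtw (R.q v) x (R.p v)}

/-- The arc `b` of the chord of `v` is empty: it contains both endpoints of no chord. -/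
def ArcEmpty (v : V) (b : Bool) : Prop :=
  ∀ u : V, ¬ (R.p u ∈ R.ArcSet v b ∧ R.q u ∈ R.ArcSet v b)

/-- A chord is peripheral if one of its arcs is empty. -/
def Peripheral (v : V) : Prop := ∃ b : Bool, R.ArcEmpty v b

/-- A set `T` of corner points satisfies the chord of `v` if each of the two
arcs of the chord contains a corner. -/
def SatChord (T : Finset Circ) (v : V) : Prop :=
  (∃ t ∈ T, t ∈ R.ArcSet v true) ∧ (∃ t ∈ T, t ∈ R.ArcSet v false)

/-- `T` is a satisfying set of corners: the corners are distinct from all chord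
endpoints and every chord has a corner in each of its arcs. -/
def GoodCorners (T : Finset Circ) : Prop :=
  (∀ t ∈ T, ∀ v : V, t ≠ R.p v ∧ t ≠ R.q v) ∧ ∀ v : V, R.SatChord T v

/-- The polygon number `ψ_r` of a circle representation: the minimum number of
corners that must be added to satisfy all chords. -/
noncomputable def polyNum : ℕ :=
  sInf {k | ∃ T : Finset Circ, T.card = k ∧ R.GoodCorners T}

/-- `c 0, …, c (ℓ-1)` is an ℓ-independent set in series: there is a point `x`
on the circle such that a clockwise traversal starting at `x` encounters both
endpoints of `c i` before both endpoints of `c j` whenever `i < j`. -/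
def SeriesIndep {ℓ : ℕ} (c : Fin ℓ → V) : Prop :=
  Function.Injective c ∧ ∃ x : Circ,
    (∀ i : Fin ℓ, x ≠ R.p (c i) ∧ x ≠ R.q (c i)) ∧
    ∀ i j : Fin ℓ, i < j →
      ∀ e ∈ ({R.p (c i), R.q (c i)} : Set Circ),
        ∀ f ∈ ({R.p (c j), R.q (c j)} : Set Circ), sbtw x e f

end CircleRep

/-- The polygon number `ψ(G)`: the minimum `k` such that `G` has a circle
representation together with `k` corners satisfying all chords. -/
noncomputable def polygonNumber {V : Type} (G : SimpleGraph V) : ℕ :=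
  sInf {k | ∃ R : CircleRep V G, ∃ T : Finset Circ, T.card = k ∧ R.GoodCorners T}

/-- A permutation graph: a graph having a circle representation admitting two
corner points such that each chord has one corner in each of its arcs. -/
def IsPermutationGraph {V : Type} (G : SimpleGraph V) : Prop :=
  ∃ R : CircleRep V G, ∃ T : Finset Circ, T.card = 2 ∧ R.GoodCorners T

/-- The clique cover number `κ(G)`: least `n` such that the vertex set can be
partitioned into `n` cliques. -/
noncomputable def cliqueCoverNumber {V : Type} (G : SimpleGraph V) : ℕ :=
  sInf {n | ∃ f : V → Fin n, ∀ u v : V, f u = f v → u = v ∨ G.Adj u v}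

/-- The independence number `α(G)`. -/
noncomputable def indepNumber {V : Type} (G : SimpleGraph V) : ℕ :=
  sSup {n | ∃ s : Finset V, (∀ u ∈ s, ∀ v ∈ s, u ≠ v → ¬ G.Adj u v) ∧ s.card = n}

/-- `A` is an asteroidal set of `G`: for every `a ∈ A`, any two vertices of
`A \ {a}` are connected by a path in `G - N[a]`. -/
def IsAsteroidal {V : Type} (G : SimpleGraph V) (A : Set V) : Prop :=
  ∀ a ∈ A, ∀ x ∈ A, ∀ y ∈ A, x ≠ a → y ≠ a →
    ∃ (hx : x ∈ {w | w ≠ a ∧ ¬ G.Adj a w}) (hy : y ∈ {w | w ≠ a ∧ ¬ G.Adj a w}),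
      (G.induce {w | w ≠ a ∧ ¬ G.Adj a w}).Reachable ⟨x, hx⟩ ⟨y, hy⟩

/-- The asteroidal number `an(G)`: maximum size of an asteroidal set. -/
noncomputable def asteroidalNumber {V : Type} (G : SimpleGraph V) : ℕ :=
  sSup {n | ∃ A : Finset V, IsAsteroidal G ↑A ∧ A.card = n}

/-- `G` is AT-free: it has no asteroidal triple. -/
def ATFree {V : Type} (G : SimpleGraph V) : Prop :=
  ¬ ∃ a b c : V, a ≠ b ∧ a ≠ c ∧ b ≠ c ∧ IsAsteroidal G {a, b, c}

/-- `G` is distance hereditary: in every connected induced subgraph, distances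
agree with those of `G`. -/
def DistanceHereditary {V : Type} (G : SimpleGraph V) : Prop :=
  ∀ s : Set V, (G.induce s).Connected →
    ∀ u v : ↥s, (G.induce s).dist u v = G.dist (u : V) (v : V)

/-- `{V1, V2}` is a split of `G`. -/
def IsSplit {V : Type} (G : SimpleGraph V) (V1 V2 : Set V) : Prop :=
  V1 ∪ V2 = Set.univ ∧ Disjoint V1 V2 ∧ 1 < V1.ncard ∧ 1 < V2.ncard ∧
    ∀ x ∈ V1, ∀ y ∈ V2,
      (G.Adj x y ↔ (∃ y' ∈ V2, G.Adj x y') ∧ (∃ x' ∈ V1, G.Adj x' y))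

/-!
Cut the circle of the representation of `G₂` at the two ends of its marker chord and squeeze the
two resulting arcs, by an orientation-preserving injection, into tiny arcs just after the two ends
of the marker chord of the representation of `G₁`, so tiny that they contain no other point of
that representation. Then drop both marker chords. Two chords from the same side cross as before.
A chord of `V₂` either has both ends in one tiny arc, and then crosses no chord of `V₁`, or has one
end in each, and then crosses exactly the chords of `V₁` crossing the marker chord; this is the
split condition `xy ∈ E ↔ x ∈ N(V₂) ∧ y ∈ N(V₁)`. The corners of both representations stay where
they are, are pairwise distinct and still serve their chords, so `k₁ + k₂` corners suffice.
-/

open Set Filter Topology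

/-- The strict betweenness `LT.toSBtw` of `ℝ` looped around. -/
def LoopSbtw (x y z : ℝ) : Prop := x < y ∧ y < z ∨ y < z ∧ z < x ∨ z < x ∧ x < y

lemma StrictMono.loopSbtw_iff {f : ℝ → ℝ} (hf : StrictMono f) {x y z : ℝ} :
    LoopSbtw (f x) (f y) (f z) ↔ LoopSbtw x y z := by
  simp only [LoopSbtw, hf.lt_iff_lt]

lemma loopSbtw_iff_of_mem_Ioo {α β s c d : ℝ} (hs : s ∈ Ioo α β) (hc : c ∉ Ico α β)
    (hd : d ∉ Ico α β) : LoopSbtw c s d ↔ LoopSbtw c α d := by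
  simp only [mem_Ioo, mem_Ico, not_and, not_lt] at hs hc hd
  unfold LoopSbtw
  grind

lemma exists_pos_forall_notMem_Ico {S : Set ℝ} (hS : S.Finite) {m : ℝ} (h₀S : 0 ∉ S) (hmS : m ∉ S)
    (hm₀ : 0 < m) (hm₁ : m < 1) :
    ∃ ε > 0, ε ≤ m ∧ m + ε ≤ 1 ∧ ∀ s ∈ S, s ∉ Ico 0 ε ∧ s ∉ Ico m (m + ε) := by
  have hIco (x s : ℝ) (hsx : s ≠ x) : ∀ᶠ ε in 𝓝[>] 0, s ∉ Ico x (x + ε) := by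
    rcases hsx.lt_or_gt with h | h
    · exact Eventually.of_forall fun ε hs => hs.1.not_gt h
    · filter_upwards [nhdsWithin_le_nhds (eventually_lt_nhds (sub_pos.2 h))] with ε hε hs
      linarith [hs.2]
  have hsmall : ∀ᶠ ε in 𝓝[>] (0:ℝ), 0 < ε ∧ ε ≤ m ∧ m + ε ≤ 1 := by
    filter_upwards [self_mem_nhdsWithin, nhdsWithin_le_nhds (eventually_lt_nhds hm₀),
      nhdsWithin_le_nhds (eventually_lt_nhds (sub_pos.2 hm₁))] with ε h₀ h₁ h₂
    exact ⟨h₀, h₁.le, by linarith⟩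
  obtain ⟨ε, ⟨hε, hεm, hmε⟩, hS⟩ := (hsmall.and (hS.eventually_all.2 fun s hs =>
    (hIco 0 s (ne_of_mem_of_not_mem hs h₀S)).and (hIco m s (ne_of_mem_of_not_mem hs hmS)))).exists
  exact ⟨ε, hε, hεm, hmε, by simpa only [zero_add] using hS⟩

noncomputable def arcSqueeze (m₁ m₂ ε u : ℝ) : ℝ := if u < m₂ then ε * u else m₁ + ε * (u - m₂)

section arcSqueeze

variable {m₁ m₂ ε : ℝ}

lemma arcSqueeze_strictMono (hε : 0 < ε) (hεm : ε ≤ m₁) (hm₂ : m₂ ≤ 1) :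
    StrictMono (arcSqueeze m₁ m₂ ε) := by
  intro u v huv
  unfold arcSqueeze
  split_ifs <;> nlinarith

lemma arcSqueeze_zero (hm₂ : 0 < m₂) : arcSqueeze m₁ m₂ ε 0 = 0 := by simp [arcSqueeze, hm₂]

lemma arcSqueeze_self : arcSqueeze m₁ m₂ ε m₂ = m₁ := by simp [arcSqueeze]

lemma arcSqueeze_mem_Ico (hε : 0 < ε) (hεm : ε ≤ m₁) (hm₁ε : m₁ + ε ≤ 1) (hm₂ : 0 < m₂) {u : ℝ}
    (hu : u ∈ Ico (0:ℝ) 1) : arcSqueeze m₁ m₂ ε u ∈ Ico (0:ℝ) 1 := by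
  obtain ⟨hu₀, hu₁⟩ := hu
  unfold arcSqueeze
  split_ifs <;> constructor <;> nlinarith

lemma arcSqueeze_mem_Ioo_of_lt (hε : 0 < ε) (hm₂ : m₂ ≤ 1) {u : ℝ} (hu : 0 < u) (hum : u < m₂) :
    arcSqueeze m₁ m₂ ε u ∈ Ioo 0 ε := by
  rw [arcSqueeze, if_pos hum]
  constructor <;> nlinarith

lemma arcSqueeze_mem_Ioo_of_gt (hε : 0 < ε) (hm₂ : 0 ≤ m₂) {u : ℝ} (hu : u < 1) (hum : m₂ < u) :
    arcSqueeze m₁ m₂ ε u ∈ Ioo m₁ (m₁ + ε) := by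
  rw [arcSqueeze, if_neg hum.not_gt]
  constructor <;> nlinarith

end arcSqueeze

namespace Circ

lemma btw_add_right (r x y z : Circ) : btw (x + r) (y + r) (z + r) ↔ btw x y z := by
  show _ ≤ _ ↔ _ ≤ _
  simp only [add_sub_add_right_eq_sub]

lemma sbtw_add_right (r x y z : Circ) : sbtw (x + r) (y + r) (z + r) ↔ sbtw x y z := by
  simp only [sbtw_iff_btw_not_btw, btw_add_right]

lemma toIcoMod_one {x y : ℝ} (hx : x ∈ Ico (0:ℝ) 1) (hy : y ∈ Ico (0:ℝ) 1) :
    toIcoMod one_pos x y = if x ≤ y then y else y + 1 := by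
  obtain ⟨hx₀, hx₁⟩ := hx
  obtain ⟨hy₀, hy₁⟩ := hy
  rw [toIcoMod_eq_iff]
  split_ifs with h
  · exact ⟨⟨h, by linarith⟩, 0, by simp⟩
  · exact ⟨⟨by linarith, by linarith⟩, -1, by simp⟩

lemma toIocMod_one {x y : ℝ} (hx : x ∈ Ico (0:ℝ) 1) (hy : y ∈ Ico (0:ℝ) 1) :
    toIocMod one_pos x y = if x < y then y else y + 1 := by
  obtain ⟨hx₀, hx₁⟩ := hx
  obtain ⟨hy₀, hy₁⟩ := hy
  rw [toIocMod_eq_iff]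
  split_ifs with h
  · exact ⟨⟨h, by linarith⟩, 0, by simp⟩
  · exact ⟨⟨by linarith, by linarith⟩, -1, by simp⟩

lemma btw_coe_iff {x y z : ℝ} (hx : x ∈ Ico (0:ℝ) 1) (hy : y ∈ Ico (0:ℝ) 1)
    (hz : z ∈ Ico (0:ℝ) 1) :
    btw (x : Circ) y z ↔ (if x ≤ y then y else y + 1) ≤ (if x < z then z else z + 1) := by
  rw [QuotientAddGroup.btw_coe_iff, toIcoMod_one hx hy, toIocMod_one hx hz]

lemma sbtw_coe_iff {x y z : ℝ} (hx : x ∈ Ico (0:ℝ) 1) (hy : y ∈ Ico (0:ℝ) 1)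
    (hz : z ∈ Ico (0:ℝ) 1) : sbtw (x : Circ) y z ↔ LoopSbtw x y z := by
  rw [sbtw_iff_btw_not_btw, btw_coe_iff hx hy hz, btw_coe_iff hz hy hx, LoopSbtw]
  obtain ⟨hx₀, hx₁⟩ := hx
  obtain ⟨hy₀, hy₁⟩ := hy
  obtain ⟨hz₀, hz₁⟩ := hz
  split_ifs <;> constructor <;> intros <;> grind

/-- The coordinate of `t` on the circle cut open at `r`, so `r` gets coordinate `0`. -/
noncomputable def chart (r t : Circ) : ℝ := AddCircle.equivIco 1 0 (t - r)

lemma chart_mem (r t : Circ) : chart r t ∈ Ico (0:ℝ) 1 := by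
  obtain ⟨h₀, h₁⟩ := (AddCircle.equivIco 1 0 (t - r)).2
  exact ⟨h₀, h₁.trans_eq (zero_add 1)⟩

lemma coe_chart (r t : Circ) : (chart r t : Circ) = t - r := AddCircle.coe_equivIco

lemma chart_add_coe (r : Circ) {x : ℝ} (hx : x ∈ Ico (0:ℝ) 1) : chart r (r + x) = x := by
  rw [chart, add_sub_cancel_left, AddCircle.equivIco_coe_of_mem (by simpa using hx)]

lemma chart_self (r : Circ) : chart r r = 0 := by
  simpa using chart_add_coe r (x := 0) (by simp)

lemma chart_injective (r : Circ) : Function.Injective (chart r) := fun s t h => by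
  have h' := congrArg ((↑) : ℝ → Circ) h
  rwa [coe_chart, coe_chart, sub_left_inj] at h'

lemma chart_pos {r t : Circ} (h : t ≠ r) : 0 < chart r t :=
  (chart_mem r t).1.lt_of_ne' fun h₀ => h (chart_injective r (h₀.trans (chart_self r).symm))

lemma sbtw_iff_loopSbtw_chart (r x y z : Circ) :
    sbtw x y z ↔ LoopSbtw (chart r x) (chart r y) (chart r z) := by
  rw [← sbtw_coe_iff (chart_mem r x) (chart_mem r y) (chart_mem r z), coe_chart, coe_chart,
    coe_chart, sub_eq_add_neg, sub_eq_add_neg, sub_eq_add_neg, sbtw_add_right]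

/-- Crossing of two chords is symmetric. -/
lemma xor_sbtw_comm {a b c d : Circ} (hab : a ≠ b) (hac : a ≠ c) (had : a ≠ d) (hbc : b ≠ c)
    (hbd : b ≠ d) (hcd : c ≠ d) :
    Xor (sbtw a c b) (sbtw a d b) ↔ Xor (sbtw c a d) (sbtw c b d) := by
  simp only [sbtw_iff_loopSbtw_chart a, chart_self]
  have hb := chart_pos hab.symm
  have hc := chart_pos hac.symm
  have hd := chart_pos had.symm
  have hbc' := (chart_injective a).ne hbc
  have hbd' := (chart_injective a).ne hbd
  have hcd' := (chart_injective a).ne hcd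
  generalize chart a b = x at *
  generalize chart a c = y at *
  generalize chart a d = z at *
  unfold LoopSbtw
  grind

end Circ

open Classical in
/-- Chords with both ends in `F` cannot tell `s` apart from the end of the chord `ab` that lies
on the same side of `ab` as `s`. -/
def CloseToEnds (a b : Circ) (F : Set Circ) (s : Circ) : Prop :=
  s ∉ F ∧ ∀ c ∈ F, ∀ d ∈ F, sbtw c s d ↔ sbtw c (if sbtw a s b then a else b) d

namespace Circ

open Classical in
lemma closeToEnds_of_chart_mem_Ioo {a b e s : Circ} {F : Set Circ} {β : ℝ}
    (hs : chart a s ∈ Ioo (chart a e) β) (hF : ∀ c ∈ F, chart a c ∉ Ico (chart a e) β)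
    (he : (if sbtw a s b then a else b) = e) : CloseToEnds a b F s := by
  refine ⟨fun hsF => hF s hsF (Ioo_subset_Ico_self hs), fun c hc d hd => ?_⟩
  rw [he, sbtw_iff_loopSbtw_chart a, sbtw_iff_loopSbtw_chart a,
    loopSbtw_iff_of_mem_Ioo hs (hF c hc) (hF d hd)]

open Classical in
lemma closeToEnds_of_chart_mem {a b s : Circ} {F : Set Circ} {ε : ℝ} (hεm : ε ≤ chart a b)
    (hF : ∀ c ∈ F, chart a c ∉ Ico 0 ε ∧ chart a c ∉ Ico (chart a b) (chart a b + ε))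
    (hs : chart a s ∈ Ioo 0 ε ∪ Ioo (chart a b) (chart a b + ε)) : CloseToEnds a b F s := by
  rcases hs with hs | hs
  · have hside : sbtw a s b := by
      rw [sbtw_iff_loopSbtw_chart a, chart_self]
      exact .inl ⟨hs.1, hs.2.trans_le hεm⟩
    exact closeToEnds_of_chart_mem_Ioo (by rwa [chart_self])
      (fun c hc => by rw [chart_self]; exact (hF c hc).1) (if_pos hside)
  · have hside : ¬ sbtw a s b := by
      have := (chart_mem a b).1
      rw [sbtw_iff_loopSbtw_chart a, chart_self]
      unfold LoopSbtw
      grind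
    exact closeToEnds_of_chart_mem_Ioo hs (fun c hc => (hF c hc).2) (if_neg hside)

theorem exists_squeeze {a b : Circ} (hab : a ≠ b) {F : Set Circ} (hF : F.Finite) (haF : a ∉ F)
    (hbF : b ∉ F) {r r' : Circ} (hr : r ≠ r') :
    ∃ Φ : Circ → Circ, Function.Injective Φ ∧ (∀ x y z, sbtw (Φ x) (Φ y) (Φ z) ↔ sbtw x y z) ∧
      Φ r = a ∧ Φ r' = b ∧ ∀ s, s ≠ r → s ≠ r' → CloseToEnds a b F (Φ s) := by
  set m₁ := chart a b
  set m₂ := chart r r'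
  have hm₁ : 0 < m₁ := chart_pos hab.symm
  have hm₂ : 0 < m₂ := chart_pos hr.symm
  have h₀F : (0:ℝ) ∉ chart a '' F := fun ⟨c, hc, h⟩ =>
    haF (chart_injective a (h.trans (chart_self a).symm) ▸ hc)
  have hm₁F : m₁ ∉ chart a '' F := fun ⟨c, hc, h⟩ => hbF (chart_injective a h ▸ hc)
  obtain ⟨ε, hε, hεm, hm₁ε, hthin⟩ :=
    exists_pos_forall_notMem_Ico (hF.image (chart a)) h₀F hm₁F hm₁ (chart_mem a b).2
  have hF' (c : Circ) (hc : c ∈ F) := hthin _ (mem_image_of_mem _ hc)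
  set ψ := arcSqueeze m₁ m₂ ε
  have hψ : StrictMono ψ := arcSqueeze_strictMono hε hεm (chart_mem r r').2.le
  have hψ₀ : ψ 0 = 0 := arcSqueeze_zero hm₂
  set Φ : Circ → Circ := fun t => a + ψ (chart r t)
  have hchart (t : Circ) : chart a (Φ t) = ψ (chart r t) :=
    chart_add_coe a (arcSqueeze_mem_Ico hε hεm hm₁ε hm₂ (chart_mem r t))
  refine ⟨Φ, fun x y h => ?_, fun x y z => ?_, ?_, ?_, fun s hsr hsr' => ?_⟩
  · exact chart_injective r (hψ.injective (by rw [← hchart, ← hchart, h]))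
  · rw [sbtw_iff_loopSbtw_chart a, hchart, hchart, hchart, hψ.loopSbtw_iff,
      ← sbtw_iff_loopSbtw_chart r]
  · show a + ((ψ (chart r r) : ℝ) : Circ) = a
    rw [chart_self, hψ₀, QuotientAddGroup.mk_zero, add_zero]
  · show a + ((arcSqueeze m₁ m₂ ε m₂ : ℝ) : Circ) = b
    rw [arcSqueeze_self, (coe_chart a b : ((m₁ : ℝ) : Circ) = b - a), add_sub_cancel]
  · refine closeToEnds_of_chart_mem hεm hF' ?_
    rw [hchart]
    rcases ((chart_injective r).ne hsr').lt_or_gt with hlt | hgt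
    · exact .inl (arcSqueeze_mem_Ioo_of_lt hε (chart_mem r r').2.le (chart_pos hsr) hlt)
    · exact .inr (arcSqueeze_mem_Ioo_of_gt hε hm₂.le (chart_mem r s).2 hgt)

end Circ

lemma xor_ite_ite {α : Type*} (P : α → Prop) (c d : Prop) [Decidable c] [Decidable d] (x y : α) :
    Xor (P (if c then x else y)) (P (if d then x else y)) ↔ Xor c d ∧ Xor (P x) (P y) := by
  by_cases c <;> by_cases d <;> simp [*, xor_comm]

namespace CircleRep

section

variable {V : Type} {G : SimpleGraph V} (R : CircleRep V G)

lemma adj_iff (u v : V) :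
    G.Adj u v ↔ u ≠ v ∧ Xor (sbtw (R.p v) (R.p u) (R.q v)) (sbtw (R.p v) (R.q u) (R.q v)) :=
  R.adj u v

@[simp] lemma p_inj {u v : V} : R.p u = R.p v ↔ u = v :=
  ⟨fun h => Sum.inl_injective (R.inj (a₁ := .inl u) (a₂ := .inl v) h), congrArg R.p⟩

@[simp] lemma q_inj {u v : V} : R.q u = R.q v ↔ u = v :=
  ⟨fun h => Sum.inr_injective (R.inj (a₁ := .inr u) (a₂ := .inr v) h), congrArg R.q⟩

@[simp] lemma p_ne_q (u v : V) : R.p u ≠ R.q v :=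
  fun h => Sum.inl_ne_inr (R.inj (a₁ := .inl u) (a₂ := .inr v) h)

@[simp] lemma q_ne_p (u v : V) : R.q u ≠ R.p v := (R.p_ne_q v u).symm

def map (Φ : Circ → Circ) (hinj : Function.Injective Φ)
    (hΦ : ∀ x y z, sbtw (Φ x) (Φ y) (Φ z) ↔ sbtw x y z) : CircleRep V G where
  p := Φ ∘ R.p
  q := Φ ∘ R.q
  inj := by rw [← Sum.comp_elim]; exact hinj.comp R.inj
  adj u v := by simpa only [Function.comp_apply, hΦ] using R.adj u v

variable {R}

lemma GoodCorners.map {T : Finset Circ} (hT : R.GoodCorners T) {Φ : Circ → Circ}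
    (hinj : Function.Injective Φ) (hΦ : ∀ x y z, sbtw (Φ x) (Φ y) (Φ z) ↔ sbtw x y z) :
    (R.map Φ hinj hΦ).GoodCorners (T.image Φ) := by
  refine ⟨?_, fun v => ?_⟩
  · simp only [Finset.mem_image, forall_exists_index, and_imp, forall_apply_eq_imp_iff₂]
    exact fun t ht v => ⟨hinj.ne (hT.1 t ht v).1, hinj.ne (hT.1 t ht v).2⟩
  · obtain ⟨⟨t, ht, htv⟩, ⟨t', ht', ht'v⟩⟩ := hT.2 v
    exact ⟨⟨Φ t, Finset.mem_image_of_mem Φ ht, (hΦ _ _ _).2 htv⟩,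
      ⟨Φ t', Finset.mem_image_of_mem Φ ht', (hΦ _ _ _).2 ht'v⟩⟩

end

section

variable {α : Type} {H : SimpleGraph (α ⊕ Unit)} (R : CircleRep (α ⊕ Unit) H)

def ordinaryPoints (T : Finset Circ) : Set Circ :=
  ↑T ∪ range (fun x => R.p (.inl x)) ∪ range (fun x => R.q (.inl x))

lemma ordinaryPoints_finite [Finite α] (T : Finset Circ) : (R.ordinaryPoints T).Finite :=
  (T.finite_toSet.union (finite_range _)).union (finite_range _)

@[simp] lemma p_inl_mem_ordinaryPoints (T : Finset Circ) (x : α) :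
    R.p (.inl x) ∈ R.ordinaryPoints T :=
  Or.inl (Or.inr ⟨x, rfl⟩)

@[simp] lemma q_inl_mem_ordinaryPoints (T : Finset Circ) (x : α) :
    R.q (.inl x) ∈ R.ordinaryPoints T :=
  Or.inr ⟨x, rfl⟩

lemma mem_ordinaryPoints_of_mem {T : Finset Circ} {t : Circ} (ht : t ∈ T) :
    t ∈ R.ordinaryPoints T :=
  Or.inl (Or.inl ht)

variable {R} {T : Finset Circ}

lemma p_inr_notMem_ordinaryPoints (hT : R.GoodCorners T) :
    R.p (.inr ()) ∉ R.ordinaryPoints T := by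
  rintro ((ht | ⟨x, hx⟩) | ⟨x, hx⟩)
  · exact (hT.1 _ ht (.inr ())).1 rfl
  · simp at hx
  · simp at hx

lemma q_inr_notMem_ordinaryPoints (hT : R.GoodCorners T) :
    R.q (.inr ()) ∉ R.ordinaryPoints T := by
  rintro ((ht | ⟨x, hx⟩) | ⟨x, hx⟩)
  · exact (hT.1 _ ht (.inr ())).2 rfl
  · simp at hx
  · simp at hx

lemma ordinaryPoints_map {Φ : Circ → Circ} (hinj : Function.Injective Φ)
    (hΦ : ∀ x y z, sbtw (Φ x) (Φ y) (Φ z) ↔ sbtw x y z) :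
    (R.map Φ hinj hΦ).ordinaryPoints (T.image Φ) = Φ '' R.ordinaryPoints T := by
  simp only [ordinaryPoints, image_union, Finset.coe_image, ← range_comp]
  rfl

end

end CircleRep

/-- `H` is `G[A]` plus a marker vertex `Sum.inr ()` adjacent to `A ∩ N(B)`, the graph `G₁` of the
split decomposition along `{A, B}`. -/
structure IsMarkerGraph {V : Type} (G : SimpleGraph V) (A B : Set V) (H : SimpleGraph (A ⊕ Unit)) :
    Prop where
  adj_inl_inl : ∀ x y : A, H.Adj (.inl x) (.inl y) ↔ G.Adj x y
  adj_inl_inr : ∀ x : A, H.Adj (.inl x) (.inr ()) ↔ ∃ y ∈ B, G.Adj x y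

lemma isMarkerGraph_fromRel {V : Type} {G : SimpleGraph V} {A B : Set V}
    {r : A ⊕ Unit → A ⊕ Unit → Prop} (hll : ∀ x y, r (.inl x) (.inl y) ↔ G.Adj x y)
    (hlr : ∀ x, r (.inl x) (.inr ()) ↔ ∃ y ∈ B, G.Adj x y) (hr : ∀ w, ¬ r (.inr ()) w) :
    IsMarkerGraph G A B (SimpleGraph.fromRel r) where
  adj_inl_inl x y := by
    simp only [fromRel_adj, ne_eq, Sum.inl.injEq, hll]
    exact ⟨fun h => h.2.elim id (·.symm), fun h => ⟨fun hxy => h.ne (by rw [hxy]), .inl h⟩⟩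
  adj_inl_inr x := by simp [hlr, hr]

/-- The data of the join composition: representations of the two marker graphs of a split with a
common marker chord, the ordinary points of the second close to the ends of that chord. -/
structure SplitGluing {V : Type} (G : SimpleGraph V) (A B : Set V) where
  cover : A ∪ B = univ
  split_adj : ∀ x ∈ A, ∀ y ∈ B, G.Adj x y ↔ (∃ y' ∈ B, G.Adj x y') ∧ ∃ x' ∈ A, G.Adj x' y
  H₁ : SimpleGraph (A ⊕ Unit)
  H₂ : SimpleGraph (B ⊕ Unit)
  marker₁ : IsMarkerGraph G A B H₁
  marker₂ : IsMarkerGraph G B A H₂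
  R₁ : CircleRep (A ⊕ Unit) H₁
  R₂ : CircleRep (B ⊕ Unit) H₂
  T₁ : Finset Circ
  T₂ : Finset Circ
  good₁ : R₁.GoodCorners T₁
  good₂ : R₂.GoodCorners T₂
  p_marker : R₂.p (.inr ()) = R₁.p (.inr ())
  q_marker : R₂.q (.inr ()) = R₁.q (.inr ())
  close : ∀ s ∈ R₂.ordinaryPoints T₂,
    CloseToEnds (R₁.p (.inr ())) (R₁.q (.inr ())) (R₁.ordinaryPoints T₁) s

namespace SplitGluing

variable {V : Type} {G : SimpleGraph V} {A B : Set V} (S : SplitGluing G A B)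

lemma mem_right (S : SplitGluing G A B) {w : V} (h : w ∉ A) : w ∈ B :=
  (S.cover ▸ mem_univ w : w ∈ A ∪ B).resolve_left h

open Classical in
noncomputable def p (w : V) : Circ :=
  if h : w ∈ A then S.R₁.p (.inl ⟨w, h⟩) else S.R₂.p (.inl ⟨w, S.mem_right h⟩)

open Classical in
noncomputable def q (w : V) : Circ :=
  if h : w ∈ A then S.R₁.q (.inl ⟨w, h⟩) else S.R₂.q (.inl ⟨w, S.mem_right h⟩)

lemma p_of_mem {w : V} (h : w ∈ A) : S.p w = S.R₁.p (.inl ⟨w, h⟩) := dif_pos h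

lemma q_of_mem {w : V} (h : w ∈ A) : S.q w = S.R₁.q (.inl ⟨w, h⟩) := dif_pos h

lemma p_of_notMem {w : V} (h : w ∉ A) : S.p w = S.R₂.p (.inl ⟨w, S.mem_right h⟩) := dif_neg h

lemma q_of_notMem {w : V} (h : w ∉ A) : S.q w = S.R₂.q (.inl ⟨w, S.mem_right h⟩) := dif_neg h

lemma ne_of_mem_ordinaryPoints {c s : Circ} (hc : c ∈ S.R₁.ordinaryPoints S.T₁)
    (hs : s ∈ S.R₂.ordinaryPoints S.T₂) : c ≠ s :=
  fun h => (S.close s hs).1 (h ▸ hc)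

lemma injective : Function.Injective (Sum.elim S.p S.q) := by
  rintro (u | u) (v | v) h <;> by_cases hu : u ∈ A <;> by_cases hv : v ∈ A <;>
    simp only [Sum.elim_inl, Sum.elim_inr, p_of_mem, q_of_mem, p_of_notMem, q_of_notMem, hu, hv,
      not_false_eq_true, CircleRep.p_inj, CircleRep.q_inj, CircleRep.p_ne_q, CircleRep.q_ne_p,
      Sum.inl.injEq, Sum.inr.injEq, Subtype.mk.injEq, reduceCtorEq] at h ⊢
  all_goals first
    | exact h
    | exact absurd h (S.ne_of_mem_ordinaryPoints (by simp) (by simp))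
    | exact absurd h.symm (S.ne_of_mem_ordinaryPoints (by simp) (by simp))

open Classical in
lemma adj_iff_of_notMem_of_mem {u v : V} (hu : u ∉ A) (hv : v ∈ A) :
    G.Adj u v ↔ Xor (sbtw (S.p v) (S.p u) (S.q v)) (sbtw (S.p v) (S.q u) (S.q v)) := by
  set x : A := ⟨v, hv⟩
  set y : B := ⟨u, S.mem_right hu⟩
  let a := S.R₁.p (.inr ())
  let b := S.R₁.q (.inr ())
  let P s := sbtw (S.R₁.p (.inl x)) s (S.R₁.q (.inl x))
  have hcross₁ : (∃ y' ∈ B, G.Adj v y') ↔ Xor (P a) (P b) := by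
    rw [← S.marker₁.adj_inl_inr x, adj_comm, S.R₁.adj_iff]
    simp [P, a, b]
  have hcross₂ : (∃ x' ∈ A, G.Adj x' u) ↔
      Xor (sbtw a (S.R₂.p (.inl y)) b) (sbtw a (S.R₂.q (.inl y)) b) := by
    simp_rw [G.adj_comm _ u]
    rw [← S.marker₂.adj_inl_inr y, S.R₂.adj_iff, S.p_marker, S.q_marker]
    simp [a, b]
  have hslide : ∀ s ∈ S.R₂.ordinaryPoints S.T₂, P s ↔ P (if sbtw a s b then a else b) :=
    fun s hs => (S.close s hs).2 _ (by simp) _ (by simp)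
  rw [G.adj_comm, S.split_adj v hv u y.2, hcross₁, hcross₂, S.p_of_mem hv, S.q_of_mem hv,
    S.p_of_notMem hu, S.q_of_notMem hu]
  change _ ↔ Xor (P (S.R₂.p (.inl y))) (P (S.R₂.q (.inl y)))
  rw [hslide (S.R₂.p (.inl y)) (by simp), hslide (S.R₂.q (.inl y)) (by simp), xor_ite_ite,
    and_comm]

lemma adj_iff (u v : V) :
    G.Adj u v ↔ u ≠ v ∧ Xor (sbtw (S.p v) (S.p u) (S.q v)) (sbtw (S.p v) (S.q u) (S.q v)) := by
  by_cases hu : u ∈ A <;> by_cases hv : v ∈ A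
  · rw [S.p_of_mem hu, S.q_of_mem hu, S.p_of_mem hv, S.q_of_mem hv]
    simpa [S.marker₁.adj_inl_inl] using S.R₁.adj_iff (.inl ⟨u, hu⟩) (.inl ⟨v, hv⟩)
  · have huv := ne_of_mem_of_not_mem hu hv
    have hne (e e' : V ⊕ V) (h : e ≠ e') : Sum.elim S.p S.q e ≠ Sum.elim S.p S.q e' :=
      S.injective.ne h
    rw [G.adj_comm, S.adj_iff_of_notMem_of_mem hv hu, and_iff_right huv]
    exact Circ.xor_sbtw_comm (hne (.inl u) (.inr u) (by simp)) (hne (.inl u) (.inl v) (by simpa))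
      (hne (.inl u) (.inr v) (by simp)) (hne (.inr u) (.inl v) (by simp))
      (hne (.inr u) (.inr v) (by simpa)) (hne (.inl v) (.inr v) (by simp))
  · rw [S.adj_iff_of_notMem_of_mem hu hv, and_iff_right (ne_of_mem_of_not_mem hv hu).symm]
  · rw [S.p_of_notMem hu, S.q_of_notMem hu, S.p_of_notMem hv, S.q_of_notMem hv]
    simpa [S.marker₂.adj_inl_inl] using
      S.R₂.adj_iff (.inl ⟨u, S.mem_right hu⟩) (.inl ⟨v, S.mem_right hv⟩)

noncomputable def rep : CircleRep V G := ⟨S.p, S.q, S.injective, S.adj_iff⟩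

lemma rep_arcSet_of_mem {w : V} (hw : w ∈ A) (b : Bool) :
    S.rep.ArcSet w b = S.R₁.ArcSet (.inl ⟨w, hw⟩) b := by
  cases b <;> simp [CircleRep.ArcSet, rep, S.p_of_mem hw, S.q_of_mem hw]

lemma rep_arcSet_of_notMem {w : V} (hw : w ∉ A) (b : Bool) :
    S.rep.ArcSet w b = S.R₂.ArcSet (.inl ⟨w, S.mem_right hw⟩) b := by
  cases b <;> simp [CircleRep.ArcSet, rep, S.p_of_notMem hw, S.q_of_notMem hw]

lemma goodCorners : S.rep.GoodCorners (S.T₁ ∪ S.T₂) := by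
  have h₁ {t} (ht : t ∈ S.T₁) := CircleRep.mem_ordinaryPoints_of_mem S.R₁ ht
  have h₂ {t} (ht : t ∈ S.T₂) := CircleRep.mem_ordinaryPoints_of_mem S.R₂ ht
  refine ⟨fun t ht w => ?_, fun w => ?_⟩
  · show t ≠ S.p w ∧ t ≠ S.q w
    rcases Finset.mem_union.1 ht with ht | ht <;> by_cases hw : w ∈ A
    · rw [S.p_of_mem hw, S.q_of_mem hw]
      exact S.good₁.1 t ht _
    · rw [S.p_of_notMem hw, S.q_of_notMem hw]
      exact ⟨S.ne_of_mem_ordinaryPoints (h₁ ht) (by simp),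
        S.ne_of_mem_ordinaryPoints (h₁ ht) (by simp)⟩
    · rw [S.p_of_mem hw, S.q_of_mem hw]
      exact ⟨(S.ne_of_mem_ordinaryPoints (by simp) (h₂ ht)).symm,
        (S.ne_of_mem_ordinaryPoints (by simp) (h₂ ht)).symm⟩
    · rw [S.p_of_notMem hw, S.q_of_notMem hw]
      exact S.good₂.1 t ht _
  · by_cases hw : w ∈ A
    · obtain ⟨⟨t, ht, h⟩, ⟨t', ht', h'⟩⟩ := S.good₁.2 (.inl ⟨w, hw⟩)
      simp only [CircleRep.SatChord, S.rep_arcSet_of_mem hw]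
      exact ⟨⟨t, Finset.mem_union_left _ ht, h⟩, ⟨t', Finset.mem_union_left _ ht', h'⟩⟩
    · obtain ⟨⟨t, ht, h⟩, ⟨t', ht', h'⟩⟩ := S.good₂.2 (.inl ⟨w, S.mem_right hw⟩)
      simp only [CircleRep.SatChord, S.rep_arcSet_of_notMem hw]
      exact ⟨⟨t, Finset.mem_union_right _ ht, h⟩, ⟨t', Finset.mem_union_right _ ht', h'⟩⟩

lemma card_corners : (S.T₁ ∪ S.T₂).card = S.T₁.card + S.T₂.card :=
  Finset.card_union_of_disjoint <| Finset.disjoint_left.2 fun _ h₁ h₂ =>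
    S.ne_of_mem_ordinaryPoints (CircleRep.mem_ordinaryPoints_of_mem _ h₁)
      (CircleRep.mem_ordinaryPoints_of_mem _ h₂) rfl

end SplitGluing

theorem exists_circleRep_of_split {V : Type} {G : SimpleGraph V} {A B : Set V} [Finite A]
    (hcover : A ∪ B = univ)
    (hsplit : ∀ x ∈ A, ∀ y ∈ B, G.Adj x y ↔ (∃ y' ∈ B, G.Adj x y') ∧ ∃ x' ∈ A, G.Adj x' y)
    {H₁ : SimpleGraph (A ⊕ Unit)} {H₂ : SimpleGraph (B ⊕ Unit)} (hH₁ : IsMarkerGraph G A B H₁)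
    (hH₂ : IsMarkerGraph G B A H₂) {R₁ : CircleRep (A ⊕ Unit) H₁} {R₂ : CircleRep (B ⊕ Unit) H₂}
    {T₁ T₂ : Finset Circ} (hT₁ : R₁.GoodCorners T₁) (hT₂ : R₂.GoodCorners T₂) :
    ∃ (R : CircleRep V G) (T : Finset Circ), T.card = T₁.card + T₂.card ∧ R.GoodCorners T := by
  obtain ⟨Φ, hinj, hΦ, hr, hr', hclose⟩ := Circ.exists_squeeze (R₁.p_ne_q (.inr ()) (.inr ()))
    (R₁.ordinaryPoints_finite T₁) (CircleRep.p_inr_notMem_ordinaryPoints hT₁)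
    (CircleRep.q_inr_notMem_ordinaryPoints hT₁) (R₂.p_ne_q (.inr ()) (.inr ()))
  have hclose' : ∀ s ∈ (R₂.map Φ hinj hΦ).ordinaryPoints (T₂.image Φ),
      CloseToEnds (R₁.p (.inr ())) (R₁.q (.inr ())) (R₁.ordinaryPoints T₁) s := by
    rw [CircleRep.ordinaryPoints_map]
    rintro _ ⟨s, hs, rfl⟩
    exact hclose s (ne_of_mem_of_not_mem hs (CircleRep.p_inr_notMem_ordinaryPoints hT₂))
      (ne_of_mem_of_not_mem hs (CircleRep.q_inr_notMem_ordinaryPoints hT₂))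
  let S : SplitGluing G A B :=
    ⟨hcover, hsplit, H₁, H₂, hH₁, hH₂, R₁, R₂.map Φ hinj hΦ, T₁, T₂.image Φ, hT₁,
      hT₂.map hinj hΦ, hr, hr', hclose'⟩
  exact ⟨S.rep, T₁ ∪ T₂.image Φ, by rw [S.card_corners, Finset.card_image_of_injective _ hinj],
    S.goodCorners⟩

theorem stmt18 {V : Type} [Fintype V] (G : SimpleGraph V) (V1 V2 : Set V)
    (hsplit : IsSplit G V1 V2) (k1 k2 : ℕ)
    (h1 : ∃ (R : CircleRep (↥V1 ⊕ Unit) (SimpleGraph.fromRel (fun a b =>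
        match a, b with
        | Sum.inl x, Sum.inl y => G.Adj x.1 y.1
        | Sum.inl x, Sum.inr _ => ∃ y ∈ V2, G.Adj x.1 y
        | _, _ => False)))
      (T : Finset Circ), T.card = k1 ∧ R.GoodCorners T)
    (h2 : ∃ (R : CircleRep (↥V2 ⊕ Unit) (SimpleGraph.fromRel (fun a b =>
        match a, b with
        | Sum.inl y, Sum.inl y' => G.Adj y.1 y'.1
        | Sum.inl y, Sum.inr _ => ∃ x ∈ V1, G.Adj y.1 x
        | _, _ => False)))
      (T : Finset Circ), T.card = k2 ∧ R.GoodCorners T) :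
    ∃ (R : CircleRep V G) (T : Finset Circ),
      T.card = k1 + k2 ∧ R.GoodCorners T := by
  obtain ⟨hcover, -, -, -, hsplit_adj⟩ := hsplit
  obtain ⟨R₁, T₁, rfl, hT₁⟩ := h1
  obtain ⟨R₂, T₂, rfl, hT₂⟩ := h2
  exact exists_circleRep_of_split hcover hsplit_adj
    (isMarkerGraph_fromRel (fun _ _ => Iff.rfl) (fun _ => Iff.rfl) (fun _ => id))
    (isMarkerGraph_fromRel (fun _ _ => Iff.rfl) (fun _ => Iff.rfl) (fun _ => id)) hT₁ hT₂
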